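/- arXiv:1009.0656 — 6 statements merged into one kernel-verified Lean document; each statement's English description precedes it below -/
import Mathlib

section
/- Let A be a unital associative k-algebra and α, β ∈ k with α ≠ 0 and β ≠ 0. Then the linear map R : A ⊗ A → A ⊗ A defined by R(a ⊗ b) = α·ab ⊗ 1 + β·1 ⊗ ab − α·a ⊗ b satisfies the braid equation R¹² ∘ R²³ ∘ R¹² = R²³ ∘ R¹² ∘ R²³ on A ⊗ A ⊗ A. -/
open TensorProduct

noncomputable def r12 (k V : Type*) [Field k] [AddCommGroup V] [Module k V]
    (R : V ⊗[k] V →ₗ[k] V ⊗[k] V) :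
    (V ⊗[k] V) ⊗[k] V →ₗ[k] (V ⊗[k] V) ⊗[k] V :=
  TensorProduct.map R LinearMap.id

noncomputable def r23 (k V : Type*) [Field k] [AddCommGroup V] [Module k V]
    (R : V ⊗[k] V →ₗ[k] V ⊗[k] V) :
    (V ⊗[k] V) ⊗[k] V →ₗ[k] (V ⊗[k] V) ⊗[k] V :=
  (TensorProduct.assoc k V V V).symm.toLinearMap ∘ₗ
    TensorProduct.map LinearMap.id R ∘ₗ (TensorProduct.assoc k V V V).toLinearMap

noncomputable def tau (k V : Type*) [Field k] [AddCommGroup V] [Module k V] :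
    V ⊗[k] V →ₗ[k] V ⊗[k] V :=
  (TensorProduct.comm k V V).toLinearMap

noncomputable def r13 (k V : Type*) [Field k] [AddCommGroup V] [Module k V]
    (R : V ⊗[k] V →ₗ[k] V ⊗[k] V) :
    (V ⊗[k] V) ⊗[k] V →ₗ[k] (V ⊗[k] V) ⊗[k] V :=
  r23 k V (tau k V) ∘ₗ r12 k V R ∘ₗ r23 k V (tau k V)

/-- The braid equation. -/
def IsBraid (k V : Type*) [Field k] [AddCommGroup V] [Module k V]
    (R : V ⊗[k] V →ₗ[k] V ⊗[k] V) : Prop :=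
  r12 k V R ∘ₗ r23 k V R ∘ₗ r12 k V R = r23 k V R ∘ₗ r12 k V R ∘ₗ r23 k V R

/-- The (constant) quantum Yang–Baxter equation. -/
def IsQYBE (k V : Type*) [Field k] [AddCommGroup V] [Module k V]
    (R : V ⊗[k] V →ₗ[k] V ⊗[k] V) : Prop :=
  r12 k V R ∘ₗ r13 k V R ∘ₗ r23 k V R = r23 k V R ∘ₗ r13 k V R ∘ₗ r12 k V R

/-
Both sides of the braid equation are trilinear, so it suffices to compare them on `a ⊗ b ⊗ c`.
There each side expands, using associativity and the unit of `A`, to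
`β³ 1⊗1⊗abc - αβ² 1⊗a⊗bc + α²β 1⊗ab⊗c + (αβ² - α²β) 1⊗abc⊗1 - α³ a⊗b⊗c + α³ a⊗bc⊗1
  + (α³ - α²β) ab⊗1⊗c - α³ ab⊗c⊗1 + α²β abc⊗1⊗1`.
-/

section PureTensors

variable {k V : Type*} [Field k] [AddCommGroup V] [Module k V] (R : V ⊗[k] V →ₗ[k] V ⊗[k] V)

@[simp]
theorem r12_tmul (a b c : V) : r12 k V R ((a ⊗ₜ b) ⊗ₜ c) = R (a ⊗ₜ b) ⊗ₜ c :=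
  rfl

@[simp]
theorem r23_tmul (a b c : V) :
    r23 k V R ((a ⊗ₜ b) ⊗ₜ c) = (TensorProduct.assoc k V V V).symm (a ⊗ₜ R (b ⊗ₜ c)) :=
  rfl

theorem isBraid_of_tmul
    (h : ∀ a b c : V, r12 k V R (r23 k V R (r12 k V R ((a ⊗ₜ b) ⊗ₜ c))) =
      r23 k V R (r12 k V R (r23 k V R ((a ⊗ₜ b) ⊗ₜ c)))) :
    IsBraid k V R :=
  TensorProduct.ext_threefold h

end PureTensors

theorem braid_of_algebra_case_i_general
    (k A : Type*) [Field k] [Ring A] [Algebra k A]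
    (α β : k)
    (R : A ⊗[k] A →ₗ[k] A ⊗[k] A)
    (hR : ∀ a b : A, R (a ⊗ₜ b) =
      α • ((a * b) ⊗ₜ (1 : A)) + β • ((1 : A) ⊗ₜ (a * b)) - α • (a ⊗ₜ b)) :
    IsBraid k A R := by
  refine isBraid_of_tmul R fun a b c => ?_
  simp only [r12_tmul, r23_tmul, hR, map_add, map_sub, map_smul, TensorProduct.tmul_add,
    TensorProduct.tmul_sub, TensorProduct.add_tmul, TensorProduct.sub_tmul,
    TensorProduct.tmul_smul, ← TensorProduct.smul_tmul', TensorProduct.assoc_symm_tmul,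
    one_mul, mul_one, mul_assoc]
  module

theorem braid_of_algebra_case_i
    (k A : Type*) [Field k] [Ring A] [Algebra k A]
    (α β : k) (hα : α ≠ 0) (hβ : β ≠ 0)
    (R : A ⊗[k] A →ₗ[k] A ⊗[k] A)
    (hR : ∀ a b : A, R (a ⊗ₜ b) =
      α • ((a * b) ⊗ₜ (1 : A)) + β • ((1 : A) ⊗ₜ (a * b)) - α • (a ⊗ₜ b)) :
    IsBraid k A R :=
  braid_of_algebra_case_i_general k A α β R hR
end

section
/- Let A be a unital associative k-algebra and α, β ∈ k nonzero. Define R_{α,β,γ}(a ⊗ b) = α·ab ⊗ 1 + β·1 ⊗ ab − γ·a ⊗ b. Then R_{α,β,α} ∘ R_{1/β, 1/α, 1/α} = id on A ⊗ A, i.e., R_{α,β,α} is invertible with inverse R_{1/β,1/α,1/α}. -/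
open TensorProduct

/-!
Write `μ₁ (a ⊗ b) = ab ⊗ 1` and `μ₂ (a ⊗ b) = 1 ⊗ ab`, so that `R_{α,β,γ} = α μ₁ + β μ₂ - γ`.
Both `μᵢ` are of the form `ι ∘ m` with `m : A ⊗ A → A` the multiplication, and `m ∘ μⱼ = m`;
hence `μᵢ ∘ μⱼ = μᵢ`. So the operators `R_{α,β,γ}` are closed under composition, with a
polynomial rule for the parameters, and for the two operators of the theorem both
`μ`-coefficients of either composite vanish while the constant term is `1`.
-/

namespace TensorProduct

variable (k A : Type*) [CommRing k] [Ring A] [Algebra k A]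

noncomputable def mulTmulOne : A ⊗[k] A →ₗ[k] A ⊗[k] A :=
  (TensorProduct.mk k A A).flip 1 ∘ₗ LinearMap.mul' k A

noncomputable def oneTmulMul : A ⊗[k] A →ₗ[k] A ⊗[k] A :=
  TensorProduct.mk k A A 1 ∘ₗ LinearMap.mul' k A

variable {k A}

@[simp]
theorem mulTmulOne_tmul (a b : A) : mulTmulOne k A (a ⊗ₜ b) = (a * b) ⊗ₜ 1 := rfl

@[simp]
theorem oneTmulMul_tmul (a b : A) : oneTmulMul k A (a ⊗ₜ b) = 1 ⊗ₜ (a * b) := rfl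

theorem mul'_comp_mulTmulOne : LinearMap.mul' k A ∘ₗ mulTmulOne k A = LinearMap.mul' k A :=
  TensorProduct.ext' fun a b => by simp

theorem mul'_comp_oneTmulMul : LinearMap.mul' k A ∘ₗ oneTmulMul k A = LinearMap.mul' k A :=
  TensorProduct.ext' fun a b => by simp

theorem mulTmulOne_comp {f : A ⊗[k] A →ₗ[k] A ⊗[k] A}
    (hf : LinearMap.mul' k A ∘ₗ f = LinearMap.mul' k A) :
    mulTmulOne k A ∘ₗ f = mulTmulOne k A := by
  rw [mulTmulOne, LinearMap.comp_assoc, hf]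

theorem oneTmulMul_comp {f : A ⊗[k] A →ₗ[k] A ⊗[k] A}
    (hf : LinearMap.mul' k A ∘ₗ f = LinearMap.mul' k A) :
    oneTmulMul k A ∘ₗ f = oneTmulMul k A := by
  rw [oneTmulMul, LinearMap.comp_assoc, hf]

variable (k A) in
noncomputable def ybOperator (α β γ : k) : A ⊗[k] A →ₗ[k] A ⊗[k] A :=
  α • mulTmulOne k A + β • oneTmulMul k A - γ • LinearMap.id

theorem ybOperator_tmul (α β γ : k) (a b : A) :
    ybOperator k A α β γ (a ⊗ₜ b) =
      α • ((a * b) ⊗ₜ (1 : A)) + β • ((1 : A) ⊗ₜ (a * b)) - γ • (a ⊗ₜ b) := by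
  simp [ybOperator]

theorem ybOperator_zero_zero_neg_one : ybOperator k A 0 0 (-1) = LinearMap.id := by
  rw [ybOperator]
  module

theorem ybOperator_comp (α β γ α' β' γ' : k) :
    ybOperator k A α β γ ∘ₗ ybOperator k A α' β' γ' =
      ybOperator k A (α * (α' + β' - γ') - γ * α') (β * (α' + β' - γ') - γ * β') (-(γ * γ')) := by
  simp only [ybOperator, LinearMap.comp_sub, LinearMap.comp_add, LinearMap.comp_smul,
    LinearMap.sub_comp, LinearMap.add_comp, LinearMap.smul_comp, LinearMap.comp_id,
    LinearMap.id_comp,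
    mulTmulOne_comp mul'_comp_mulTmulOne, mulTmulOne_comp mul'_comp_oneTmulMul,
    oneTmulMul_comp mul'_comp_mulTmulOne, oneTmulMul_comp mul'_comp_oneTmulMul]
  module

end TensorProduct

theorem inverse_of_algebra_yb_operator
    (k A : Type*) [Field k] [Ring A] [Algebra k A]
    (α β : k) (hα : α ≠ 0) (hβ : β ≠ 0)
    (R S : A ⊗[k] A →ₗ[k] A ⊗[k] A)
    (hR : ∀ a b : A, R (a ⊗ₜ b) =
      α • ((a * b) ⊗ₜ (1 : A)) + β • ((1 : A) ⊗ₜ (a * b)) - α • (a ⊗ₜ b))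
    (hS : ∀ a b : A, S (a ⊗ₜ b) =
      (1 / β) • ((a * b) ⊗ₜ (1 : A)) + (1 / α) • ((1 : A) ⊗ₜ (a * b))
        - (1 / α) • (a ⊗ₜ b)) :
    R ∘ₗ S = LinearMap.id ∧ S ∘ₗ R = LinearMap.id := by
  have hR' : R = ybOperator k A α β α := TensorProduct.ext' fun a b => by
    rw [hR, ybOperator_tmul]
  have hS' : S = ybOperator k A (1 / β) (1 / α) (1 / α) := TensorProduct.ext' fun a b => by
    rw [hS, ybOperator_tmul]
  subst hR' hS'
  rw [← ybOperator_zero_zero_neg_one, ybOperator_comp, ybOperator_comp]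
  constructor <;> congr 1 <;> field_simp <;> ring
end

section
/- Let A be a unital associative k-algebra with dim A ≥ 2 (so there exists a ∈ A with {1, a} linearly independent), and α, β, γ ∈ k. If R_{α,β,γ}(a ⊗ b) = α·ab ⊗ 1 + β·1 ⊗ ab − γ·a ⊗ b satisfies the braid equation and is invertible, then (α = γ ≠ 0 and β ≠ 0) or (β = γ ≠ 0 and α ≠ 0) or (α = β = 0 and γ ≠ 0). -/
open TensorProduct

/- ---------- auxiliary material ---------- -/

noncomputable def pairF {k A : Type*} [Field k] [AddCommGroup A] [Module k A]
    (f g : A →ₗ[k] k) : A ⊗[k] A →ₗ[k] k :=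
  (TensorProduct.lid k k).toLinearMap ∘ₗ TensorProduct.map f g

lemma pairF_tmul {k A : Type*} [Field k] [AddCommGroup A] [Module k A]
    (f g : A →ₗ[k] k) (x y : A) : pairF f g (x ⊗ₜ y) = f x * g y := by
  simp [pairF, smul_eq_mul]

noncomputable def tripF {k A : Type*} [Field k] [AddCommGroup A] [Module k A]
    (f g h : A →ₗ[k] k) : (A ⊗[k] A) ⊗[k] A →ₗ[k] k :=
  (TensorProduct.lid k k).toLinearMap ∘ₗ TensorProduct.map (pairF f g) h

lemma tripF_tmul {k A : Type*} [Field k] [AddCommGroup A] [Module k A]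
    (f g h : A →ₗ[k] k) (x y z : A) :
    tripF f g h ((x ⊗ₜ y) ⊗ₜ z) = f x * g y * h z := by
  simp [tripF, pairF_tmul, smul_eq_mul]

lemma li_swap {k A : Type*} [Field k] [AddCommGroup A] [Module k A] {x y : A}
    (h : LinearIndependent k ![x, y]) : LinearIndependent k ![y, x] := by
  have h2 := h.comp (Equiv.swap (0 : Fin 2) 1) (Equiv.injective _)
  have : (![x, y] ∘ (Equiv.swap (0 : Fin 2) 1)) = ![y, x] := by
    funext i
    fin_cases i <;> simp [Equiv.swap_apply_left, Equiv.swap_apply_right]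
  rwa [this] at h2

lemma exists_dual {k A : Type*} [Field k] [AddCommGroup A] [Module k A] {x y : A}
    (h : LinearIndependent k ![x, y]) : ∃ f : A →ₗ[k] k, f x = 0 ∧ f y = 1 := by
  have hxy : y ∉ Submodule.span k {x} := by
    intro hy
    rw [Submodule.mem_span_singleton] at hy
    obtain ⟨c, hc⟩ := hy
    have h0 : c • x + (-1 : k) • y = 0 := by rw [← hc, neg_one_smul]; exact add_neg_cancel _
    have := Fintype.linearIndependent_iff.mp h ![c, -1] ?_ 1
    · simp at this
    · simpa [Fin.sum_univ_two] using h0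
  obtain ⟨f, hfy, hmap⟩ := Submodule.exists_dual_map_eq_bot_of_notMem hxy inferInstance
  have hfx : f x = 0 := by
    have hle : Submodule.span k {x} ≤ LinearMap.ker f :=
      (Submodule.map_le_iff_le_comap.mp (le_of_eq hmap)).trans (by simp)
    exact hle (Submodule.mem_span_singleton_self x)
  exact ⟨(f y)⁻¹ • f, by simp [hfx], by simp [inv_mul_cancel₀ hfy]⟩

section braidcalc

variable {k A : Type*} [Field k] [Ring A] [Algebra k A]
  (α β γ : k) (R : A ⊗[k] A →ₗ[k] A ⊗[k] A)
  (hR : ∀ a b : A, R (a ⊗ₜ b) =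
    α • ((a * b) ⊗ₜ (1 : A)) + β • ((1 : A) ⊗ₜ (a * b)) - γ • (a ⊗ₜ b))

include hR

lemma my_r12_apply (x y z : A) :
    r12 k A R ((x ⊗ₜ y) ⊗ₜ z) =
      α • (((x * y) ⊗ₜ (1 : A)) ⊗ₜ z) + β • (((1 : A) ⊗ₜ (x * y)) ⊗ₜ z)
        - γ • ((x ⊗ₜ y) ⊗ₜ z) := by
  simp only [r12, TensorProduct.map_tmul, LinearMap.id_coe, id_eq, hR,
    TensorProduct.add_tmul, TensorProduct.sub_tmul, TensorProduct.smul_tmul']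

lemma my_r23_apply (x y z : A) :
    r23 k A R ((x ⊗ₜ y) ⊗ₜ z) =
      α • ((x ⊗ₜ (y * z)) ⊗ₜ (1 : A)) + β • ((x ⊗ₜ (1 : A)) ⊗ₜ (y * z))
        - γ • ((x ⊗ₜ y) ⊗ₜ z) := by
  simp only [r23, LinearMap.comp_apply, LinearEquiv.coe_coe, TensorProduct.assoc_tmul,
    TensorProduct.map_tmul, LinearMap.id_coe, id_eq, hR, TensorProduct.tmul_add,
    TensorProduct.tmul_sub, TensorProduct.tmul_smul, map_add, map_sub, map_smul,
    TensorProduct.assoc_symm_tmul]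

end braidcalc

theorem classification_of_algebra_yb_operators
    (k A : Type*) [Field k] [Ring A] [Algebra k A]
    (hdim : ∃ a : A, LinearIndependent k ![(1 : A), a])
    (α β γ : k)
    (R : A ⊗[k] A →ₗ[k] A ⊗[k] A)
    (hR : ∀ a b : A, R (a ⊗ₜ b) =
      α • ((a * b) ⊗ₜ (1 : A)) + β • ((1 : A) ⊗ₜ (a * b)) - γ • (a ⊗ₜ b))
    (hbraid : IsBraid k A R)
    (hinv : Function.Bijective R) :
    (α = γ ∧ γ ≠ 0 ∧ β ≠ 0) ∨ (β = γ ∧ γ ≠ 0 ∧ α ≠ 0) ∨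
      (α = 0 ∧ β = 0 ∧ γ ≠ 0) := by
  obtain ⟨a, ha⟩ := hdim
  obtain ⟨f, hf1, hfa⟩ := exists_dual ha
  obtain ⟨g, hga, hg1⟩ := exists_dual (li_swap ha)
  rw [IsBraid] at hbraid
  -- a ⊗ 1 ≠ 1 ⊗ a and both are nonzero
  have hne : (a ⊗ₜ[k] (1 : A)) ≠ ((1 : A) ⊗ₜ[k] a) := by
    intro h
    have := congrArg (pairF f g) h
    rw [pairF_tmul, pairF_tmul, hfa, hg1, hf1] at this
    simp at this
  have hne1 : (a ⊗ₜ[k] (1 : A)) ≠ 0 := by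
    intro h
    have := congrArg (pairF f g) h
    rw [pairF_tmul, hfa, hg1, map_zero] at this
    simp at this
  have hne2 : ((1 : A) ⊗ₜ[k] a) ≠ 0 := by
    intro h
    have := congrArg (pairF g f) h
    rw [pairF_tmul, hfa, hg1, map_zero] at this
    simp at this
  -- γ ≠ 0
  have hγ : γ ≠ 0 := by
    intro h0
    apply hne
    apply hinv.injective
    rw [hR, hR, h0]
    simp [mul_one, one_mul]
  -- braid equation consequences
  have hb1 := congrArg (tripF g g f) (LinearMap.congr_fun hbraid
    (((1 : A) ⊗ₜ (1 : A)) ⊗ₜ a))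
  have hb2 := congrArg (tripF g f g) (LinearMap.congr_fun hbraid
    ((a ⊗ₜ (1 : A)) ⊗ₜ (1 : A)))
  simp only [LinearMap.comp_apply, my_r12_apply α β γ R hR, my_r23_apply α β γ R hR,
    one_mul, mul_one, map_add, map_sub, map_smul, smul_add, smul_sub, smul_smul,
    tripF_tmul, hf1, hfa, hg1, hga, smul_eq_mul, mul_zero, zero_mul, mul_one, one_mul]
    at hb1 hb2
  have e1 : α * (α - γ) * (β - γ) = 0 := by linear_combination hb1
  have e2 : β * (α - γ) * (β - γ) = 0 := by linear_combination hb2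
  by_cases hαγ : α = γ
  · -- need β ≠ 0
    left
    refine ⟨hαγ, hγ, ?_⟩
    intro hβ
    apply hne1
    apply hinv.injective
    rw [hR, hαγ, hβ, map_zero]
    simp [mul_one]
  · by_cases hβγ : β = γ
    · right; left
      refine ⟨hβγ, hγ, ?_⟩
      intro hα
      apply hne2
      apply hinv.injective
      rw [hR, hβγ, hα, map_zero]
      simp [one_mul]
    · right; right
      have hX : (α - γ) * (β - γ) ≠ 0 :=
        mul_ne_zero (sub_ne_zero.mpr hαγ) (sub_ne_zero.mpr hβγ)
      constructor
      · have := mul_eq_zero.mp (by linear_combination e1 : α * ((α - γ) * (β - γ)) = 0)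
        tauto
      constructor
      · have := mul_eq_zero.mp (by linear_combination e2 : β * ((α - γ) * (β - γ)) = 0)
        tauto
      · exact hγ
end

section
/- Let A be a unital associative k-algebra, p, q, u, v ∈ k with pu ≠ qv and qu ≠ pv. Define R(u,v)(a ⊗ b) = p(u−v)·1 ⊗ ab + q(u−v)·ab ⊗ 1 − (pu−qv)·b ⊗ a and S(a ⊗ b) = [p(u−v)/((qu−pv)(pu−qv))]·ba ⊗ 1 + [q(u−v)/((qu−pv)(pu−qv))]·1 ⊗ ba − [1/(pu−qv)]·b ⊗ a. Then S ∘ R(u,v) = id and R(u,v) ∘ S = id on A ⊗ A. -/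
/-!
Both composites send `a ⊗ b` to `a ⊗ b` plus multiples of `ab ⊗ 1` and `1 ⊗ ab` (resp. `ba ⊗ 1`
and `1 ⊗ ba`). Writing `R` with coefficients `α, β, γ` and `S` with `α / (δγ), β / (δγ), 1 / γ`,
the coefficients of these multiples are `α` and `β` times `(α + β - γ - δ) / (γδ)`, and for the
colored operator `α + β = (p + q)(u - v) = (pu - qv) + (qu - pv) = γ + δ`.
-/

open TensorProduct

theorem inverse_of_apply_tmul {k A : Type*} [Field k] [Ring A] [Algebra k A]
    {α β γ δ : k} (hsum : α + β = γ + δ) (hγ : γ ≠ 0) (hδ : δ ≠ 0)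
    {R S : A ⊗[k] A →ₗ[k] A ⊗[k] A}
    (hR : ∀ a b : A, R (a ⊗ₜ b) =
      α • ((1 : A) ⊗ₜ (a * b)) + β • ((a * b) ⊗ₜ (1 : A)) - γ • (b ⊗ₜ a))
    (hS : ∀ a b : A, S (a ⊗ₜ b) =
      (α / (δ * γ)) • ((b * a) ⊗ₜ (1 : A)) + (β / (δ * γ)) • ((1 : A) ⊗ₜ (b * a))
        - (1 / γ) • (b ⊗ₜ a)) :
    S ∘ₗ R = LinearMap.id ∧ R ∘ₗ S = LinearMap.id := by
  obtain rfl : β = γ + δ - α := by linear_combination hsum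
  constructor <;>
  · refine TensorProduct.ext' fun a b => ?_
    simp only [LinearMap.comp_apply, LinearMap.id_apply, hR, hS, map_add, map_sub, map_smul,
      mul_one, one_mul]
    match_scalars <;> field_simp <;> ring

theorem colored_yb_inverse
    (k A : Type*) [Field k] [Ring A] [Algebra k A]
    (p q u v : k) (h1 : p * u ≠ q * v) (h2 : q * u ≠ p * v)
    (R S : A ⊗[k] A →ₗ[k] A ⊗[k] A)
    (hR : ∀ a b : A, R (a ⊗ₜ b) =
      (p * (u - v)) • ((1 : A) ⊗ₜ (a * b)) + (q * (u - v)) • ((a * b) ⊗ₜ (1 : A))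
        - (p * u - q * v) • (b ⊗ₜ a))
    (hS : ∀ a b : A, S (a ⊗ₜ b) =
      (p * (u - v) / ((q * u - p * v) * (p * u - q * v))) • ((b * a) ⊗ₜ (1 : A))
        + (q * (u - v) / ((q * u - p * v) * (p * u - q * v))) • ((1 : A) ⊗ₜ (b * a))
        - (1 / (p * u - q * v)) • (b ⊗ₜ a)) :
    S ∘ₗ R = LinearMap.id ∧ R ∘ₗ S = LinearMap.id :=
  inverse_of_apply_tmul (by ring) (sub_ne_zero.mpr h1) (sub_ne_zero.mpr h2) hR hS
end

section
/- Let A be a unital associative k-algebra and p, q ∈ k. The map R(a ⊗ b) = p·1 ⊗ ab + q·ab ⊗ 1 − p·b ⊗ a satisfies the quantum Yang–Baxter equation R¹²R¹³R²³ = R²³R¹³R¹². -/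
open TensorProduct

theorem qybe_specialized_operator
    (k A : Type*) [Field k] [Ring A] [Algebra k A]
    (p q : k)
    (R : A ⊗[k] A →ₗ[k] A ⊗[k] A)
    (hR : ∀ a b : A, R (a ⊗ₜ b) =
      p • ((1 : A) ⊗ₜ (a * b)) + q • ((a * b) ⊗ₜ (1 : A)) - p • (b ⊗ₜ a)) :
    IsQYBE k A R := by
  unfold IsQYBE
  apply TensorProduct.ext_threefold
  intro a b c
  simp only [r12, r13, r23, tau, LinearMap.comp_apply, TensorProduct.map_tmul,
    LinearMap.id_apply, LinearEquiv.coe_coe, TensorProduct.assoc_tmul,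
    TensorProduct.assoc_symm_tmul, TensorProduct.comm_tmul, hR,
    map_add, map_sub, map_smul, TensorProduct.tmul_add, TensorProduct.tmul_sub,
    TensorProduct.add_tmul, TensorProduct.sub_tmul, ← TensorProduct.smul_tmul',
    TensorProduct.tmul_smul, one_mul, mul_one, mul_assoc, smul_mul_assoc, mul_smul_comm, smul_smul]
  module
end

section
/- Let V = W ⊕ k·c be a k-vector space (c ∉ W), and let f, g : V ⊗ V → V be linear maps vanishing on V ⊗ c and on c ⊗ V (i.e., f(v ⊗ c) = f(c ⊗ v) = g(v ⊗ c) = g(c ⊗ v) = 0 for all v ∈ V). Define R : V ⊗ V → V ⊗ V by R(v ⊗ w) = f(v ⊗ w) ⊗ c + c ⊗ g(v ⊗ w). Then R satisfies the quantum Yang–Baxter equation R¹²R¹³R²³ = R²³R¹³R¹². -/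
open TensorProduct

theorem qybe_from_direct_sum_decomposition
    (k V : Type*) [Field k] [AddCommGroup V] [Module k V]
    (W : Submodule k V) (c : V)
    (hdecomp : IsCompl W (Submodule.span k {c})) (hc : c ∉ W)
    (f g : V ⊗[k] V →ₗ[k] V)
    (hf : ∀ v : V, f (v ⊗ₜ c) = 0 ∧ f (c ⊗ₜ v) = 0)
    (hg : ∀ v : V, g (v ⊗ₜ c) = 0 ∧ g (c ⊗ₜ v) = 0)
    (R : V ⊗[k] V →ₗ[k] V ⊗[k] V)
    (hR : ∀ x : V ⊗[k] V, R x = f x ⊗ₜ c + c ⊗ₜ g x) :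
    IsQYBE k V R := by
  have hf1 : ∀ v : V, f (v ⊗ₜ[k] c) = 0 := fun v => (hf v).1
  have hf2 : ∀ v : V, f (c ⊗ₜ[k] v) = 0 := fun v => (hf v).2
  have hg1 : ∀ v : V, g (v ⊗ₜ[k] c) = 0 := fun v => (hg v).1
  have hg2 : ∀ v : V, g (c ⊗ₜ[k] v) = 0 := fun v => (hg v).2
  unfold IsQYBE
  apply TensorProduct.ext_threefold
  intro u v w
  simp [r12, r13, r23, tau, hR, hf1, hf2, hg1, hg2, TensorProduct.tmul_add,
    TensorProduct.add_tmul]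
end
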